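/- A permutation π of {1,...,n} satisfies π ⊕ 1 = π (i.e., its toric class has exactly one element) if and only if π is a natural permutation ν_{k,n} for some k coprime to n+1. Consequently, the number of such permutations is φ(n+1), Euler's totient of n+1. -/

import Mathlib

/-- `π ∈ S_n` is a natural permutation: for some `j` invertible mod `n+1` (with inverse
`k`), the letter of `π` at position `i` is `i·j mod (n+1)` (positions and letters taken
in `{1,…,n}`). -/
def IsNaturalPerm (n : ℕ) (π : Equiv.Perm (Fin n)) : Prop :=
  ∃ j k : ZMod (n + 1), k * j = 1 ∧
    ∀ i : Fin n, (((π i : ℕ) + 1 : ℕ) : ZMod (n + 1)) =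
      (((i : ℕ) + 1 : ℕ) : ZMod (n + 1)) * j
/-- The circular word `0π₁⋯π_n` of a permutation `π ∈ S_n`, as a function on
`ZMod (n+1)`: position `0` holds the letter `0` and position `i` (for `1 ≤ i ≤ n`)
holds the letter `π(i)`. -/
def torHat {n : ℕ} (π : Equiv.Perm (Fin n)) (x : ZMod (n + 1)) : ZMod (n + 1) :=
  if h : x.val = 0 then 0
  else (((π ⟨x.val - 1, by have := ZMod.val_lt x; omega⟩ : Fin n) : ℕ) + 1 : ℕ)

/-- `π` and `μ` are torically equivalent: the circular word of `μ` is obtained from that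
of `π` by adding a constant `m` to all letters modulo `n+1` (and re-reading from the
position just after the letter `0`, i.e. rotating positions by some `c`). -/
def ToricEquiv {n : ℕ} (π μ : Equiv.Perm (Fin n)) : Prop :=
  ∃ m c : ZMod (n + 1), ∀ x : ZMod (n + 1), torHat μ x = torHat π (x + c) + m

/-! Read the circular word of `π` as a map `w : ZMod (n+1) → ZMod (n+1)` with `w 0 = 0`;
then `π ⊕ 1 = π` says `w x = w (x + c) + 1` for a fixed rotation `c`. Iterating from `0`
gives `w (-t * c) = t` for every `t`, so on the finite ring `w` is the inverse of
`x ↦ -x * c`: hence `c` is a unit and `w` is multiplication by `j = -c⁻¹`, i.e. `π` is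
natural. Conversely every unit `u` yields exactly one natural permutation, `i ↦ i * u` on
the nonzero residues, so there are `φ(n+1)` of them. -/

theorem ZMod.exists_eq_mul_of_map_add_eq_add_one {m : ℕ} [NeZero m] {f : ZMod m → ZMod m}
    {c : ZMod m} (h0 : f 0 = 0) (hc : ∀ x, f x = f (x + c) + 1) :
    ∃ j, -j * c = 1 ∧ ∀ x, f x = x * j := by
  have hnat : ∀ t : ℕ, f (-(t : ZMod m) * c) = t := by
    intro t
    induction t with
    | zero => simpa using h0
    | succ t ih =>
      rw [hc, show -((t + 1 : ℕ) : ZMod m) * c + c = -(t : ZMod m) * c by push_cast; ring, ih]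
      exact (Nat.cast_succ t).symm
  have hmul : ∀ x, f (-x * c) = x := fun x => by
    simpa only [ZMod.natCast_zmod_val] using hnat x.val
  have hinj : Function.Injective f := Finite.injective_iff_surjective.mpr fun x => ⟨_, hmul x⟩
  have hinv : ∀ x, -f x * c = x := fun x => hinj (hmul (f x))
  refine ⟨f 1, hinv 1, fun x => ?_⟩
  calc f x = f x * (-f 1 * c) := by rw [hinv, mul_one]
    _ = (-f x * c) * f 1 := by ring
    _ = x * f 1 := by rw [hinv]

section

variable {n : ℕ}

theorem ZMod.val_natCast_fin_add_one (i : Fin n) :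
    ((((i : ℕ) + 1 : ℕ) : ZMod (n + 1)).val) = (i : ℕ) + 1 :=
  ZMod.val_cast_of_lt (by omega)

theorem ZMod.natCast_fin_add_one_ne_zero (i : Fin n) :
    (((i : ℕ) + 1 : ℕ) : ZMod (n + 1)) ≠ 0 := by
  intro h
  simpa [h] using ZMod.val_natCast_fin_add_one i

def finEquivZModNeZero (n : ℕ) : Fin n ≃ {x : ZMod (n + 1) // x ≠ 0} where
  toFun i := ⟨((i : ℕ) + 1 : ℕ), ZMod.natCast_fin_add_one_ne_zero i⟩
  invFun x := ⟨x.1.val - 1, by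
    have := ZMod.val_lt x.1
    have := (ZMod.val_ne_zero _).mpr x.2
    omega⟩
  left_inv i := Fin.ext (by simp only [ZMod.val_natCast_fin_add_one, Nat.add_sub_cancel])
  right_inv x := by
    have := (ZMod.val_ne_zero _).mpr x.2
    ext
    simp [Nat.sub_add_cancel (Nat.one_le_iff_ne_zero.mpr this)]

@[simp]
theorem coe_finEquivZModNeZero (i : Fin n) :
    (finEquivZModNeZero n i : ZMod (n + 1)) = (((i : ℕ) + 1 : ℕ) : ZMod (n + 1)) :=
  rfl

theorem torHat_zero (π : Equiv.Perm (Fin n)) : torHat π 0 = 0 := by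
  simp [torHat]

theorem torHat_natCast_succ (π : Equiv.Perm (Fin n)) (i : Fin n) :
    torHat π (((i : ℕ) + 1 : ℕ) : ZMod (n + 1)) =
      (((π i : ℕ) + 1 : ℕ) : ZMod (n + 1)) := by
  rw [torHat, dif_neg (by rw [ZMod.val_natCast_fin_add_one]; omega)]
  congr 4
  exact Fin.ext (by simp only [ZMod.val_natCast_fin_add_one, Nat.add_sub_cancel])

theorem forall_torHat_eq_mul_iff (π : Equiv.Perm (Fin n)) (j : ZMod (n + 1)) :
    (∀ x, torHat π x = x * j) ↔ ∀ i : Fin n,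
      (((π i : ℕ) + 1 : ℕ) : ZMod (n + 1)) = (((i : ℕ) + 1 : ℕ) : ZMod (n + 1)) * j := by
  refine ⟨fun h i => by rw [← torHat_natCast_succ, h], fun h x => ?_⟩
  by_cases hx : x = 0
  · rw [hx, torHat_zero, zero_mul]
  · obtain ⟨i, hi⟩ := (finEquivZModNeZero n).surjective ⟨x, hx⟩
    obtain rfl : (((i : ℕ) + 1 : ℕ) : ZMod (n + 1)) = x := congrArg Subtype.val hi
    rw [torHat_natCast_succ, h]

theorem isNaturalPerm_iff_torHat_eq_mul (π : Equiv.Perm (Fin n)) :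
    IsNaturalPerm n π ↔ ∃ j k : ZMod (n + 1), k * j = 1 ∧ ∀ x, torHat π x = x * j := by
  simp only [IsNaturalPerm, forall_torHat_eq_mul_iff]

theorem exists_torHat_shift_iff_isNaturalPerm (π : Equiv.Perm (Fin n)) :
    (∃ c : ZMod (n + 1), ∀ x, torHat π x = torHat π (x + c) + 1) ↔ IsNaturalPerm n π := by
  rw [isNaturalPerm_iff_torHat_eq_mul]
  constructor
  · rintro ⟨c, hc⟩
    obtain ⟨j, hjc, hj⟩ := ZMod.exists_eq_mul_of_map_add_eq_add_one (torHat_zero π) hc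
    exact ⟨j, -c, by linear_combination hjc, hj⟩
  · rintro ⟨j, k, hkj, hj⟩
    exact ⟨-k, fun x => by rw [hj, hj]; linear_combination hkj⟩

def natPerm (u : (ZMod (n + 1))ˣ) : Equiv.Perm (Fin n) :=
  (finEquivZModNeZero n).permCongr.symm ((Units.mulRight u).subtypePerm fun x => by simp)

theorem natCast_natPerm_add_one (u : (ZMod (n + 1))ˣ) (i : Fin n) :
    (((natPerm u i : ℕ) + 1 : ℕ) : ZMod (n + 1)) =
      (((i : ℕ) + 1 : ℕ) : ZMod (n + 1)) * u := by
  rw [← coe_finEquivZModNeZero, natPerm]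
  simp

theorem isNaturalPerm_iff_exists_natPerm (π : Equiv.Perm (Fin n)) :
    IsNaturalPerm n π ↔ ∃ u, natPerm u = π := by
  constructor
  · rintro ⟨j, k, hkj, hπ⟩
    refine ⟨⟨j, k, by rw [mul_comm, hkj], hkj⟩, Equiv.ext fun i => ?_⟩
    apply (finEquivZModNeZero n).injective
    ext
    simp only [coe_finEquivZModNeZero, natCast_natPerm_add_one, hπ]
  · rintro ⟨u, rfl⟩
    exact ⟨u, ↑u⁻¹, u.inv_mul, natCast_natPerm_add_one u⟩

theorem natPerm_injective : Function.Injective (natPerm (n := n)) := by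
  intro u v huv
  cases n with
  | zero =>
    have : Subsingleton (ZMod 1) := ZMod.subsingleton_iff.mpr rfl
    exact Subsingleton.elim u v
  | succ n =>
    have h := natCast_natPerm_add_one u 0
    rw [huv, natCast_natPerm_add_one v 0] at h
    ext
    simpa using h.symm

end

/-- `π ⊕ 1 = π` (toric class of size one) iff `π` is a natural permutation; the number
of such permutations is `φ(n+1)`. -/
theorem stmt_15 (n : ℕ) :
    (∀ π : Equiv.Perm (Fin n),
      (∃ c : ZMod (n + 1), ∀ x : ZMod (n + 1), torHat π x = torHat π (x + c) + 1) ↔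
        IsNaturalPerm n π) ∧
    {π : Equiv.Perm (Fin n) | IsNaturalPerm n π}.ncard = Nat.totient (n + 1) := by
  refine ⟨exists_torHat_shift_iff_isNaturalPerm, ?_⟩
  have hrange : {π : Equiv.Perm (Fin n) | IsNaturalPerm n π} = Set.range natPerm := by
    ext π
    simp [isNaturalPerm_iff_exists_natPerm]
  rw [hrange, Set.ncard_range_of_injective natPerm_injective, Nat.card_eq_fintype_card,
    ZMod.card_units_eq_totient]
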